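/- Let ⟨ℛ, Q, C⟩ be an admissible triple and P a SQCLP(ℛ,Q,C)-program. Then the interpretation transformer T_P is well defined: for every qc-interpretation I, T_P(I) is again a qc-interpretation, i.e., T_P(I) is a set of defined observable qc-atoms closed under the entailment relation ⊨_{Q,C}. -/

import Mathlib

open scoped BigOperators

/-- A qualification domain: a bounded lattice equipped with an attenuation operation. -/
structure QualificationDomain (D : Type*) [Lattice D] [BoundedOrder D] where
  att : D → D → D
  att_assoc : ∀ d e f : D, att (att d e) f = att d (att e f)
  att_comm : ∀ d e : D, att d e = att e d
  att_mono : ∀ d d' e e' : D, d ≤ d' → e ≤ e' → att d e ≤ att d' e'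
  att_top : ∀ d : D, att d ⊤ = d
  att_bot : ∀ d : D, att d ⊥ = ⊥
  att_le : ∀ d e : D, att d e ≤ e
  att_ne_bot : ∀ d e : D, d ≠ ⊥ → e ≠ ⊥ → att d e ≠ ⊥
  att_inf : ∀ d e₁ e₂ : D, att d (e₁ ⊓ e₂) = att d e₁ ⊓ att d e₂

/-- First-order terms over variables `V` and data constructors `CS`. -/
inductive Trm (V : Type*) (CS : Type*) : Type _
  | var : V → Trm V CS
  | app : CS → List (Trm V CS) → Trm V CS

variable {V CS DP PP : Type*}

/-- Application of a substitution to a term. -/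
def Trm.subst (θ : V → Trm V CS) : Trm V CS → Trm V CS
  | .var X => θ X
  | .app c ts => .app c (ts.attach.map fun t => t.1.subst θ)
decreasing_by
  have := List.sizeOf_lt_of_mem t.2
  simp only [Trm.app.sizeOf_spec]
  omega

/-- Application of a valuation (ground substitution) to a term; ground terms are
terms over the empty set of variables. -/
def Trm.applyVal (η : V → Trm Empty CS) : Trm V CS → Trm Empty CS
  | .var X => η X
  | .app c ts => .app c (ts.attach.map fun t => t.1.applyVal η)
decreasing_by
  have := List.sizeOf_lt_of_mem t.2
  simp only [Trm.app.sizeOf_spec]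
  omega

variable {D : Type*} [Lattice D] [BoundedOrder D]

/-- The extension of a proximity relation on symbols to a proximity relation on terms:
`ext R (var X) (var X) = ⊤`, `ext R t s = ⊥` if exactly one of `t`, `s` is a variable or
they are applications of different arities, and
`ext R (c(t₁,…,tₙ)) (c'(s₁,…,sₙ)) = R c c' ⊓ ext R t₁ s₁ ⊓ ⋯ ⊓ ext R tₙ sₙ`. -/
def Trm.ext [DecidableEq V] (R : CS → CS → D) : Trm V CS → Trm V CS → D
  | .var X, .var Y => if X = Y then (⊤ : D) else ⊥
  | .var _, .app _ _ => ⊥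
  | .app _ _, .var _ => ⊥
  | .app c ts, .app c' ss =>
      if ts.length = ss.length then
        R c c' ⊓ ((ts.zip ss).attach.map (fun p => Trm.ext R p.1.1 p.1.2)).foldr (· ⊓ ·) ⊤
      else ⊥
termination_by t _ => sizeOf t
decreasing_by
  have h1 : p.1.1 ∈ ts := (List.of_mem_zip p.2).1
  have := List.sizeOf_lt_of_mem h1
  simp only [Trm.app.sizeOf_spec]
  omega

/-- Constraints over terms: primitive atoms, equations, conjunction and
existential quantification. -/
inductive Constr (V CS PP : Type*) : Type _
  | prim : PP → List (Trm V CS) → Constr V CS PP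
  | eq : Trm V CS → Trm V CS → Constr V CS PP
  | and : Constr V CS PP → Constr V CS PP → Constr V CS PP
  | ex : V → Constr V CS PP → Constr V CS PP

/-- Satisfaction of a constraint by a valuation, relative to an interpretation `pI` of the
primitive predicates over ground terms.  An equation is true iff both sides evaluate to the
same ground term. -/
def Constr.sat [DecidableEq V] (pI : PP → List (Trm Empty CS) → Prop)
    (η : V → Trm Empty CS) : Constr V CS PP → Prop
  | .prim p ts => pI p (ts.map (Trm.applyVal η))
  | .eq t s => t.applyVal η = s.applyVal η
  | .and c₁ c₂ => c₁.sat pI η ∧ c₂.sat pI η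
  | .ex X c => ∃ u : Trm Empty CS, c.sat pI (Function.update η X u)

/-- The set of solutions of a set of constraints. -/
def Sol [DecidableEq V] (pI : PP → List (Trm Empty CS) → Prop)
    (Pi : Set (Constr V CS PP)) : Set (V → Trm Empty CS) :=
  {η | ∀ c ∈ Pi, c.sat pI η}

/-- Entailment `Π ⊨_C π` of a constraint by a set of constraints. -/
def Entails [DecidableEq V] (pI : PP → List (Trm Empty CS) → Prop)
    (Pi : Set (Constr V CS PP)) (c : Constr V CS PP) : Prop :=
  ∀ η ∈ Sol pI Pi, c.sat pI η

/-- Semantic form of the entailment `Π' ⊨_C Πθ`: every solution of `Π'`, composed with the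
substitution `θ`, is a solution of `Π`. -/
def EntailsSubst [DecidableEq V] (pI : PP → List (Trm Empty CS) → Prop)
    (Pi' : Set (Constr V CS PP)) (θ : V → Trm V CS) (Pi : Set (Constr V CS PP)) : Prop :=
  ∀ η ∈ Sol pI Pi', (fun X => (θ X).applyVal η) ∈ Sol pI Pi

/-- Constraint-based term proximity: `t ≈_{d,Π} s` iff there are terms `t̂`, `ŝ` with
`Π ⊨_C t == t̂`, `Π ⊨_C s == ŝ` and `ext R t̂ ŝ ⊒ d`. -/
def TermClose [DecidableEq V] (R : CS → CS → D) (pI : PP → List (Trm Empty CS) → Prop)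
    (d : D) (Pi : Set (Constr V CS PP)) (t s : Trm V CS) : Prop :=
  ∃ th sh : Trm V CS,
    Entails pI Pi (Constr.eq t th) ∧ Entails pI Pi (Constr.eq s sh) ∧ d ≤ Trm.ext R th sh

/-- Atoms: defined atoms, primitive atoms and equations. -/
inductive Atom (V CS DP PP : Type*) : Type _
  | defd : DP → List (Trm V CS) → Atom V CS DP PP
  | prim : PP → List (Trm V CS) → Atom V CS DP PP
  | eq : Trm V CS → Trm V CS → Atom V CS DP PP

/-- Application of a substitution to an atom. -/
def Atom.subst (θ : V → Trm V CS) : Atom V CS DP PP → Atom V CS DP PP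
  | .defd r ts => .defd r (ts.map (Trm.subst θ))
  | .prim p ts => .prim p (ts.map (Trm.subst θ))
  | .eq t s => .eq (t.subst θ) (s.subst θ)

/-- A defined atom. -/
def Atom.IsDefined : Atom V CS DP PP → Prop
  | .defd _ _ => True
  | .prim _ _ => False
  | .eq _ _ => False

/-- A qualified constrained atom (qc-atom) `A#d ⇐ Π`. -/
structure QCAtom (V CS DP PP D : Type*) where
  atom : Atom V CS DP PP
  deg : D
  cons : Set (Constr V CS PP)

/-- A qc-atom is observable iff its qualification value is not `⊥` and its constraint
set is satisfiable. -/
def Observable [DecidableEq V] (pI : PP → List (Trm Empty CS) → Prop)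
    (φ : QCAtom V CS DP PP D) : Prop :=
  φ.deg ≠ ⊥ ∧ (Sol pI φ.cons).Nonempty

/-- The entailment relation `φ ⊨_{Q,C} φ'` between qc-atoms: there is a substitution `θ`
with `A' = Aθ`, `d' ⊑ d` and `Π' ⊨_C Πθ`. -/
def QCEntails [DecidableEq V] (pI : PP → List (Trm Empty CS) → Prop)
    (φ φ' : QCAtom V CS DP PP D) : Prop :=
  ∃ θ : V → Trm V CS,
    φ'.atom = φ.atom.subst θ ∧ φ'.deg ≤ φ.deg ∧ EntailsSubst pI φ'.cons θ φ.cons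

/-- A qc-interpretation: a set of defined observable qc-atoms closed under `⊨_{Q,C}`. -/
def IsInterp [DecidableEq V] (pI : PP → List (Trm Empty CS) → Prop)
    (I : Set (QCAtom V CS DP PP D)) : Prop :=
  (∀ φ ∈ I, φ.atom.IsDefined ∧ Observable pI φ) ∧
  (∀ φ ∈ I, ∀ φ' : QCAtom V CS DP PP D,
    QCEntails pI φ φ' → Observable pI φ' → φ' ∈ I)

/-- Validity of an observable qc-atom in a qc-interpretation. -/
def Valid [DecidableEq V] (R : CS → CS → D) (pI : PP → List (Trm Empty CS) → Prop)
    (I : Set (QCAtom V CS DP PP D)) (φ : QCAtom V CS DP PP D) : Prop :=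
  match φ.atom with
  | .defd _ _ => φ ∈ I
  | .prim p ts => Entails pI φ.cons (Constr.prim p ts)
  | .eq t s => TermClose R pI φ.deg φ.cons t s

/-- A `Q`-valued proximity relation on the symbols (variables, data constructors, defined
predicates, primitive predicates): it is determined by its restrictions to data constructors
and to defined predicate symbols, since it behaves as the identity on variables and is `⊥`
between symbols of different kinds (and on primitive predicates it is only nonbottom between
equal symbols). -/
structure ProximityRel (D : Type*) [Lattice D] [BoundedOrder D] {CS DP : Type*}
    (arC : CS → ℕ) (arD : DP → ℕ) where
  dc : CS → CS → D
  dp : DP → DP → D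
  dc_refl : ∀ c, dc c c = ⊤
  dc_symm : ∀ c c', dc c c' = dc c' c
  dc_arity : ∀ c c', dc c c' ≠ ⊥ → arC c = arC c'
  dp_refl : ∀ r, dp r r = ⊤
  dp_symm : ∀ r r', dp r r' = dp r' r
  dp_arity : ∀ r r', dp r r' ≠ ⊥ → arD r = arD r'

/-- A program clause `p(t₁,…,tₙ) ←α– B₁#w₁, …, Bₘ#wₘ`; a threshold `wⱼ` is either `some w`
with `w ∈ D` or `none` (standing for `?`). -/
structure Clause (V CS DP PP D : Type*) where
  headPred : DP
  headArgs : List (Trm V CS)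
  att : D
  body : List (Atom V CS DP PP × Option D)

/-- Well-formedness of a clause: the attenuation factor and all thresholds are `≠ ⊥`. -/
def ClauseWF (C : Clause V CS DP PP D) : Prop :=
  C.att ≠ ⊥ ∧ ∀ bw ∈ C.body, ∀ w, bw.2 = some w → w ≠ (⊥ : D)

/-- A SQCLP program: a set of well-formed clauses. -/
def ProgWF (P : Set (Clause V CS DP PP D)) : Prop := ∀ C ∈ P, ClauseWF C

/-- `e ⊒? w`: trivially true for `w = ?`, and `w ⊑ e` otherwise. -/
def MeetsThreshold (e : D) : Option D → Prop
  | none => True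
  | some w => w ≤ e

/-- The observable defined qc-atom `φ : p'(t'₁,…,t'ₙ)#d ⇐ Π` is an immediate consequence of
the qc-interpretation `I` via the clause `C`. -/
def ImmCons [DecidableEq V] (Q : QualificationDomain D) {arC : CS → ℕ} {arD : DP → ℕ}
    (Rl : ProximityRel D arC arD) (pI : PP → List (Trm Empty CS) → Prop)
    (I : Set (QCAtom V CS DP PP D)) (C : Clause V CS DP PP D)
    (φ : QCAtom V CS DP PP D) : Prop :=
  ∃ (p' : DP) (ts' : List (Trm V CS)),
    φ.atom = Atom.defd p' ts' ∧ Observable pI φ ∧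
    ∃ (θ : V → Trm V CS) (hn : C.headArgs.length = ts'.length)
      (ds : Fin ts'.length → D) (es : Fin C.body.length → D),
      Rl.dp p' C.headPred ≠ ⊥ ∧
      (∀ i, ds i ≠ ⊥) ∧ (∀ j, es j ≠ ⊥) ∧
      (∀ i : Fin ts'.length,
        TermClose Rl.dc pI (ds i) φ.cons (ts'.get i)
          ((C.headArgs.get (Fin.cast hn.symm i)).subst θ)) ∧
      (∀ j : Fin C.body.length,
        Valid Rl.dc pI I ⟨((C.body.get j).1.subst θ), es j, φ.cons⟩) ∧
      (∀ j : Fin C.body.length, MeetsThreshold (es j) (C.body.get j).2) ∧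
      φ.deg ≤ (Rl.dp p' C.headPred ⊓ Finset.univ.inf ds) ⊓ Q.att C.att (Finset.univ.inf es)

/-- The interpretation transformer `T_P`. -/
def Tp [DecidableEq V] (Q : QualificationDomain D) {arC : CS → ℕ} {arD : DP → ℕ}
    (Rl : ProximityRel D arC arD) (pI : PP → List (Trm Empty CS) → Prop)
    (P : Set (Clause V CS DP PP D)) (I : Set (QCAtom V CS DP PP D)) :
    Set (QCAtom V CS DP PP D) :=
  {φ | ∃ C ∈ P, ImmCons Q Rl pI I C φ}

/-- `I` is a model of the clause `C`. -/
def ModelsClause [DecidableEq V] (Q : QualificationDomain D) {arC : CS → ℕ} {arD : DP → ℕ}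
    (Rl : ProximityRel D arC arD) (pI : PP → List (Trm Empty CS) → Prop)
    (I : Set (QCAtom V CS DP PP D)) (C : Clause V CS DP PP D) : Prop :=
  ∀ φ, ImmCons Q Rl pI I C φ → φ ∈ I

/-- `I ⊨_{ℛ,Q,C} P` : `I` is a model of the program `P`. -/
def ModelsProg [DecidableEq V] (Q : QualificationDomain D) {arC : CS → ℕ} {arD : DP → ℕ}
    (Rl : ProximityRel D arC arD) (pI : PP → List (Trm Empty CS) → Prop)
    (I : Set (QCAtom V CS DP PP D)) (P : Set (Clause V CS DP PP D)) : Prop :=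
  ∀ C ∈ P, ModelsClause Q Rl pI I C

/-- Derivability `P ⊢_{ℛ,Q,C} φ` in the Proximity-based Qualified Constrained Horn Logic
SQCHL(ℛ,Q,C), with inference rules SQDA, SQEA and SQPA. -/
inductive Deriv [DecidableEq V] (Q : QualificationDomain D) {arC : CS → ℕ} {arD : DP → ℕ}
    (Rl : ProximityRel D arC arD) (pI : PP → List (Trm Empty CS) → Prop)
    (P : Set (Clause V CS DP PP D)) : QCAtom V CS DP PP D → Prop
  | sqea : ∀ (d : D) (Pi : Set (Constr V CS PP)) (t s : Trm V CS),
      d ≠ ⊥ → TermClose Rl.dc pI d Pi t s → Deriv Q Rl pI P ⟨Atom.eq t s, d, Pi⟩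
  | sqpa : ∀ (d : D) (Pi : Set (Constr V CS PP)) (p : PP) (ts : List (Trm V CS)),
      d ≠ ⊥ → Entails pI Pi (Constr.prim p ts) → Deriv Q Rl pI P ⟨Atom.prim p ts, d, Pi⟩
  | sqda : ∀ (C : Clause V CS DP PP D), C ∈ P →
      ∀ (θ : V → Trm V CS) (p' : DP) (ts' : List (Trm V CS)) (d : D)
        (Pi : Set (Constr V CS PP)) (hn : C.headArgs.length = ts'.length)
        (ds : Fin ts'.length → D) (es : Fin C.body.length → D),
      Rl.dp p' C.headPred ≠ ⊥ →
      (∀ i, ds i ≠ ⊥) → (∀ j, es j ≠ ⊥) →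
      (∀ i : Fin ts'.length,
        Deriv Q Rl pI P
          ⟨Atom.eq (ts'.get i) ((C.headArgs.get (Fin.cast hn.symm i)).subst θ), ds i, Pi⟩) →
      (∀ j : Fin C.body.length,
        Deriv Q Rl pI P ⟨((C.body.get j).1.subst θ), es j, Pi⟩) →
      (∀ j : Fin C.body.length, MeetsThreshold (es j) (C.body.get j).2) →
      d ≤ (Rl.dp p' C.headPred ⊓ Finset.univ.inf ds) ⊓ Q.att C.att (Finset.univ.inf es) →
      Deriv Q Rl pI P ⟨Atom.defd p' ts', d, Pi⟩

/-!
If `φ` is an immediate consequence of `I` via a clause `C` and a substitution `θ`, and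
`φ ⊨_{Q,C} φ'` via `θ'`, then `φ'` is an immediate consequence via `C` and `θθ'` with the same
qualification values: entailed equations and primitive constraints survive `θ'`, the proximity
`ℛ(t̂, ŝ)` can only grow under substitution, and defined body atoms stay in `I` because `I` is
closed under `⊨_{Q,C}`.
-/

@[induction_eliminator]
theorem Trm.induction {motive : Trm V CS → Prop} (var : ∀ X, motive (.var X))
    (app : ∀ c ts, (∀ t ∈ ts, motive t) → motive (.app c ts)) : ∀ t, motive t
  | .var X => var X
  | .app c ts => app c ts fun t _ => Trm.induction var app t

@[simp]
theorem Trm.subst_var (θ : V → Trm V CS) (X : V) : (Trm.var X).subst θ = θ X := by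
  rw [Trm.subst]

@[simp]
theorem Trm.subst_app (θ : V → Trm V CS) (c : CS) (ts : List (Trm V CS)) :
    (Trm.app c ts).subst θ = .app c (ts.map (Trm.subst θ)) := by
  rw [Trm.subst, List.attach_map_val]

@[simp]
theorem Trm.applyVal_var (η : V → Trm Empty CS) (X : V) :
    (Trm.var X : Trm V CS).applyVal η = η X := by
  rw [Trm.applyVal]

@[simp]
theorem Trm.applyVal_app (η : V → Trm Empty CS) (c : CS) (ts : List (Trm V CS)) :
    (Trm.app c ts).applyVal η = .app c (ts.map (Trm.applyVal η)) := by
  rw [Trm.applyVal, List.attach_map_val]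

theorem Trm.applyVal_subst (θ : V → Trm V CS) (η : V → Trm Empty CS) (t : Trm V CS) :
    (t.subst θ).applyVal η = t.applyVal (fun X => (θ X).applyVal η) := by
  induction t with
  | var X => simp
  | app c ts ih => simpa using List.map_congr_left ih

theorem Trm.subst_subst (θ θ' : V → Trm V CS) (t : Trm V CS) :
    (t.subst θ).subst θ' = t.subst (fun X => (θ X).subst θ') := by
  induction t with
  | var X => simp
  | app c ts ih => simpa using List.map_congr_left ih

theorem Atom.subst_subst (θ θ' : V → Trm V CS) (A : Atom V CS DP PP) :
    (A.subst θ).subst θ' = A.subst (fun X => (θ X).subst θ') := by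
  cases A <;> simp [Atom.subst, Function.comp_def, Trm.subst_subst]

theorem List.le_foldr_inf_map {α : Type*} {l : List α} {f : α → D} {d : D} :
    d ≤ (l.map f).foldr (· ⊓ ·) ⊤ ↔ ∀ a ∈ l, d ≤ f a := by
  induction l with
  | nil => simp
  | cons a l ih => simp [ih]

theorem Trm.ext_app [DecidableEq V] (R : CS → CS → D) (c c' : CS) (ts ss : List (Trm V CS)) :
    Trm.ext R (.app c ts) (.app c' ss) =
      if ts.length = ss.length then
        R c c' ⊓ ((ts.zip ss).map (fun p => Trm.ext R p.1 p.2)).foldr (· ⊓ ·) ⊤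
      else ⊥ := by
  rw [Trm.ext, List.attach_map_val (l := ts.zip ss) (f := fun p => Trm.ext R p.1 p.2)]

theorem Trm.ext_self [DecidableEq V] {R : CS → CS → D} (hR : ∀ c, R c c = ⊤) (t : Trm V CS) :
    Trm.ext R t t = ⊤ := by
  induction t with
  | var X => simp [Trm.ext]
  | app c ts ih =>
    rw [Trm.ext_app, if_pos rfl, hR, top_inf_eq, eq_top_iff, List.le_foldr_inf_map]
    have hzip : ts.zip ts = ts.map fun t => (t, t) := by
      simpa using List.zip_map' (l := ts) (f := id) (g := id)
    simpa [hzip] using fun t ht => (ih t ht).ge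

theorem Trm.ext_le_ext_subst [DecidableEq V] {R : CS → CS → D} (hR : ∀ c, R c c = ⊤)
    (θ : V → Trm V CS) (t s : Trm V CS) :
    Trm.ext R t s ≤ Trm.ext R (t.subst θ) (s.subst θ) := by
  induction t generalizing s with
  | var X =>
    cases s with
    | var Y =>
      by_cases h : X = Y
      · simp [h, Trm.ext_self hR]
      · simp [Trm.ext, h]
    | app c ss => simp [Trm.ext]
  | app c ts ih =>
    cases s with
    | var Y => simp [Trm.ext]
    | app c' ss =>
      simp only [Trm.ext_app, Trm.subst_app, List.length_map, List.zip_map, List.map_map]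
      split_ifs
      · refine inf_le_inf_left _ (List.le_foldr_inf_map.2 fun p hp => ?_)
        exact (List.le_foldr_inf_map.1 le_rfl p hp).trans (ih p.1 (List.of_mem_zip hp).1 p.2)
      · exact le_rfl

section Entailment

variable [DecidableEq V] {pI : PP → List (Trm Empty CS) → Prop}
  {Pi Pi' : Set (Constr V CS PP)} {θ : V → Trm V CS}

theorem Entails.eq_subst (hθ : EntailsSubst pI Pi' θ Pi) {t s : Trm V CS}
    (h : Entails pI Pi (.eq t s)) : Entails pI Pi' (.eq (t.subst θ) (s.subst θ)) := by
  intro η hη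
  simpa only [Constr.sat, Trm.applyVal_subst] using h _ (hθ η hη)

theorem Entails.prim_subst (hθ : EntailsSubst pI Pi' θ Pi) {p : PP} {ts : List (Trm V CS)}
    (h : Entails pI Pi (.prim p ts)) : Entails pI Pi' (.prim p (ts.map (Trm.subst θ))) := by
  intro η hη
  simpa only [Constr.sat, List.map_map, Function.comp_def, Trm.applyVal_subst]
    using h _ (hθ η hη)

theorem TermClose.subst {R : CS → CS → D} (hR : ∀ c, R c c = ⊤) {d : D}
    (hθ : EntailsSubst pI Pi' θ Pi) {t s : Trm V CS} (h : TermClose R pI d Pi t s) :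
    TermClose R pI d Pi' (t.subst θ) (s.subst θ) := by
  obtain ⟨t', s', ht, hs, hd⟩ := h
  exact ⟨t'.subst θ, s'.subst θ, ht.eq_subst hθ, hs.eq_subst hθ,
    hd.trans (Trm.ext_le_ext_subst hR θ t' s')⟩

theorem Valid.subst {R : CS → CS → D} (hR : ∀ c, R c c = ⊤) {I : Set (QCAtom V CS DP PP D)}
    (hI : IsInterp pI I) {A : Atom V CS DP PP} {e : D} (he : e ≠ ⊥)
    (hPi' : (Sol pI Pi').Nonempty) (hθ : EntailsSubst pI Pi' θ Pi)
    (h : Valid R pI I ⟨A, e, Pi⟩) : Valid R pI I ⟨A.subst θ, e, Pi'⟩ := by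
  cases A with
  | defd r ts => exact hI.2 _ h _ ⟨θ, rfl, le_rfl, hθ⟩ ⟨he, hPi'⟩
  | prim p ts => exact Entails.prim_subst hθ h
  | eq t s => exact TermClose.subst hR hθ h

end Entailment

theorem Finset.inf_comp_finCast {n m : ℕ} (h : n = m) (f : Fin m → D) :
    Finset.univ.inf (f ∘ Fin.cast h) = Finset.univ.inf f := by
  subst h; rfl

theorem ImmCons.of_qcEntails [DecidableEq V] {Q : QualificationDomain D} {arC : CS → ℕ}
    {arD : DP → ℕ} {Rl : ProximityRel D arC arD} {pI : PP → List (Trm Empty CS) → Prop}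
    {I : Set (QCAtom V CS DP PP D)} (hI : IsInterp pI I) {C : Clause V CS DP PP D}
    {φ φ' : QCAtom V CS DP PP D} (h : ImmCons Q Rl pI I C φ) (hent : QCEntails pI φ φ')
    (hobs : Observable pI φ') : ImmCons Q Rl pI I C φ' := by
  obtain ⟨p', ts', hatom, -, θ, hn, ds, es, hdp, hds, hes, hhead, hbody, hthr, hdeg⟩ := h
  obtain ⟨θ', hatom', hdeg', hθ'⟩ := hent
  have hlen : (ts'.map (Trm.subst θ')).length = ts'.length := List.length_map _
  refine ⟨p', ts'.map (Trm.subst θ'), by rw [hatom', hatom]; rfl, hobs,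
    fun X => (θ X).subst θ', hn.trans hlen.symm, ds ∘ Fin.cast hlen, es, hdp,
    fun i => hds _, hes, fun i => ?_, fun j => ?_, hthr, ?_⟩
  · simpa [Trm.subst_subst] using (hhead (Fin.cast hlen i)).subst Rl.dc_refl hθ'
  · simpa [Atom.subst_subst] using (hbody j).subst Rl.dc_refl hI (hes j) hobs.2 hθ'
  · rw [Finset.inf_comp_finCast]
    exact hdeg'.trans hdeg

section Theorems

variable {V CS DP PP D : Type*} [DecidableEq V] [Lattice D] [BoundedOrder D]
variable {arC : CS → ℕ} {arD : DP → ℕ}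

theorem Tp_well_defined_general
    (Q : QualificationDomain D) (Rl : ProximityRel D arC arD)
    (pI : PP → List (Trm Empty CS) → Prop)
    (P : Set (Clause V CS DP PP D))
    (I : Set (QCAtom V CS DP PP D)) (hI : IsInterp pI I) :
    IsInterp pI (Tp Q Rl pI P I) := by
  constructor
  · rintro φ ⟨C, -, p', ts', hatom, hobs, -⟩
    exact ⟨by simp [hatom, Atom.IsDefined], hobs⟩
  · rintro φ ⟨C, hC, hφ⟩ φ' hent hobs
    exact ⟨C, hC, hφ.of_qcEntails hI hent hobs⟩

/-- The interpretation transformer `T_P` is well defined: for every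
qc-interpretation `I`, `T_P(I)` is again a qc-interpretation. -/
theorem Tp_well_defined
    (Q : QualificationDomain D) (Rl : ProximityRel D arC arD)
    (pI : PP → List (Trm Empty CS) → Prop)
    (P : Set (Clause V CS DP PP D)) (hP : ProgWF P)
    (I : Set (QCAtom V CS DP PP D)) (hI : IsInterp pI I) :
    IsInterp pI (Tp Q Rl pI P I) :=
  Tp_well_defined_general Q Rl pI P I hI

end Theorems
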